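/- arXiv:1504.06518 — 2 statements merged into one kernel-verified Lean document; each statement's English description precedes it below -/
import Mathlib

section
/- For the perturbed family F_s(x,y,z,w) with rows (z, y+w, x+s) and (w, x, y), s ≠ 0, the variety X_s = F_s⁻¹(M²_{2,3}) ⊂ ℂ⁴ is smooth: at every point of X_s the Jacobian matrix of the three 2×2 minors has rank 2. -/
/-!
Write `A` for the `2×3` matrix with rows `(z, y+w, x+s)` and `(w, x, y)` and `f₁, f₂, f₃` for its
minors. Expanding the `3×3` determinant obtained by repeating a row of `A` gives a syzygy
`Σ ± aₖ fₖ = 0` for each row `a` of `A`; differentiating it on `X_s`, where the `fₖ` vanish,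
puts both signed rows of `A` into the left kernel of the Jacobian. They cannot both vanish when
`s ≠ 0`, so the rank is at most `2`. Conversely, if all `2×2` minors of the Jacobian vanished,
three of them together with `f₃ = 0` would force `y = 0`, then `x = 0`, then `s² = 0`.
-/

open Matrix

namespace Matrix

theorem rank_lt_card_height_of_vecMul_eq_zero {R m n : Type*} [Field R] [Fintype m] [Fintype n]
    {A : Matrix m n R} {v : m → R} (hv : v ≠ 0) (h : v ᵥ* A = 0) : A.rank < Fintype.card m := by
  have hrow : (replicateRow (Fin 1) v).rank = 1 := by
    rw [rank_eq_finrank_span_row]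
    change Module.finrank R (Submodule.span R (Set.range fun _ : Fin 1 => v)) = 1
    rw [Set.range_const, finrank_span_singleton hv]
  have := rank_add_rank_le_card_of_mul_eq_zero (A := replicateRow (Fin 1) v) (B := A)
    (by rw [← replicateRow_vecMul, h, replicateRow_zero])
  omega

theorem two_le_rank_of_mul_sub_mul_ne_zero {R m n : Type*} [CommRing R] [IsDomain R] [Fintype n]
    (A : Matrix m n R) {i i' : m} {j j' : n} (h : A i j * A i' j' - A i j' * A i' j ≠ 0) :
    2 ≤ A.rank :=
  calc 2 = (A.submatrix ![i, i'] ![j, j']).rank := by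
        rw [rank_of_det_ne_zero (by rwa [det_fin_two]), Fintype.card_fin]
    _ ≤ A.rank := rank_submatrix_le A _ _

end Matrix

section SmoothingJacobian

variable {K : Type*} [Field K] {s x y z w : K}

/-- Rows are the gradients, in the variables `(x, y, z, w)`, of `z x - w (y+w)`,
`z y - w (x+s)` and `(y+w) y - x (x+s)`. -/
def smoothingJacobian (s x y z w : K) : Matrix (Fin 3) (Fin 4) K :=
  !![z, -w, x, -(y + 2 * w);
     -w, z, y, -(x + s);
     -(2 * x + s), 2 * y + w, 0, y]

theorem smoothingJacobian_rank_le_two (hs : s ≠ 0)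
    (h1 : z * x - w * (y + w) = 0) (h2 : z * y - w * (x + s) = 0)
    (h3 : (y + w) * y - x * (x + s) = 0) :
    (smoothingJacobian s x y z w).rank ≤ 2 := by
  have hrow₁ : ![x + s, -(y + w), z] ᵥ* smoothingJacobian s x y z w = 0 := by
    ext j
    fin_cases j <;> simp [smoothingJacobian, vecMul, dotProduct, Fin.sum_univ_succ]
    · linear_combination -h1
    · linear_combination h2
    · linear_combination -h3
    · linear_combination h2
  have hrow₂ : ![y, -x, w] ᵥ* smoothingJacobian s x y z w = 0 := by
    ext j
    fin_cases j <;> simp [smoothingJacobian, vecMul, dotProduct, Fin.sum_univ_succ]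
    · linear_combination h2
    · linear_combination -h1
    · ring
    · linear_combination -h3
  refine Nat.le_of_lt_succ ?_
  by_cases hrow₁_zero : ![x + s, -(y + w), z] = 0
  · have hxs : x + s = 0 := by simpa using congrFun hrow₁_zero 0
    refine rank_lt_card_height_of_vecMul_eq_zero (fun hrow₂_zero => hs ?_) hrow₂
    have hx : x = 0 := by simpa using congrFun hrow₂_zero 1
    linear_combination hxs - hx
  · exact rank_lt_card_height_of_vecMul_eq_zero hrow₁_zero hrow₁

theorem two_le_smoothingJacobian_rank (hs : s ≠ 0) (h3 : (y + w) * y - x * (x + s) = 0) :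
    2 ≤ (smoothingJacobian s x y z w).rank := by
  by_contra! hlt
  have minor (i i' : Fin 3) (j j' : Fin 4) :
      smoothingJacobian s x y z w i j * smoothingJacobian s x y z w i' j' -
        smoothingJacobian s x y z w i j' * smoothingJacobian s x y z w i' j = 0 := by
    by_contra h
    exact (two_le_rank_of_mul_sub_mul_ne_zero _ h).not_gt hlt
  have m1 : y * y - -(x + s) * 0 = 0 := minor 1 2 2 3
  have m2 : z * 0 - x * -(2 * x + s) = 0 := minor 0 2 0 2
  have m3 : -w * y - -(x + s) * -(2 * x + s) = 0 := minor 1 2 0 3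
  obtain rfl : y = 0 := mul_self_eq_zero.1 (by linear_combination m1)
  obtain rfl : x = 0 := mul_self_eq_zero.1 (by linear_combination m2 + h3)
  exact hs (mul_self_eq_zero.1 (by linear_combination -m3))

end SmoothingJacobian

/-- For `s ≠ 0`, the determinantal variety `X_s ⊂ ℂ⁴` cut out by the `2×2` minors of the
matrix with rows `(z, y+w, x+s)` and `(w, x, y)` is smooth: at every point of `X_s` the
Jacobian matrix of the three minors has rank `2` (the codimension of `X_s`). -/
theorem essential_smoothing_is_smooth (s : ℂ) (hs : s ≠ 0) (x y z w : ℂ)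
    (h1 : z * x - w * (y + w) = 0)
    (h2 : z * y - w * (x + s) = 0)
    (h3 : (y + w) * y - x * (x + s) = 0) :
    (!![z, -w, x, -(y + 2 * w);
        -w, z, y, -(x + s);
        -(2 * x + s), 2 * y + w, 0, y] : Matrix (Fin 3) (Fin 4) ℂ).rank = 2 :=
  le_antisymm (smoothingJacobian_rank_le_two hs h1 h2 h3) (two_le_smoothingJacobian_rank hs h3)
end

section
/- A hyperplane H ⊂ ℂ^N through the origin that is transversal to every limit of tangent spaces of the regular part of an analytic variety X at 0 is not itself a limit of tangent hyperplanes to X at 0; conversely, a hyperplane that is a limit of tangent hyperplanes to X at 0 fails to be transversal to some limiting tangent space. -/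
open Filter Topology

noncomputable section

variable (N : ℕ)

/-- Convergence of a sequence of subspaces of `ℂ^N` to a subspace (convergence in the
Grassmannian), expressed via pointwise convergence of the orthogonal projections. -/
def SubspaceTendsto (T : ℕ → Submodule ℂ (EuclideanSpace ℂ (Fin N)))
    (L : Submodule ℂ (EuclideanSpace ℂ (Fin N))) : Prop :=
  ∀ v : EuclideanSpace ℂ (Fin N),
    Tendsto (fun k => (Submodule.orthogonalProjection (T k) v : EuclideanSpace ℂ (Fin N))) atTop
      (𝓝 (Submodule.orthogonalProjection L v))

/-- `T` is a limit at `0` of tangent spaces to the regular part `Xreg` of `X`,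
where `τ x` is the tangent space to `Xreg` at `x`. -/
def IsLimitTangentSpace (Xreg : Set (EuclideanSpace ℂ (Fin N)))
    (τ : EuclideanSpace ℂ (Fin N) → Submodule ℂ (EuclideanSpace ℂ (Fin N)))
    (T : Submodule ℂ (EuclideanSpace ℂ (Fin N))) : Prop :=
  ∃ x : ℕ → EuclideanSpace ℂ (Fin N),
    (∀ k, x k ∈ Xreg) ∧ (∀ k, x k ≠ 0) ∧ Tendsto x atTop (𝓝 0) ∧
    SubspaceTendsto N (fun k => τ (x k)) T

/-- `H` is a limit at `0` of tangent hyperplanes to `X`: a limit of hyperplanes `H k`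
containing the tangent spaces `τ (x k)` along a sequence `x k → 0` in the regular part. -/
def IsLimitTangentHyperplane (Xreg : Set (EuclideanSpace ℂ (Fin N)))
    (τ : EuclideanSpace ℂ (Fin N) → Submodule ℂ (EuclideanSpace ℂ (Fin N)))
    (H : Submodule ℂ (EuclideanSpace ℂ (Fin N))) : Prop :=
  ∃ (x : ℕ → EuclideanSpace ℂ (Fin N))
    (Hs : ℕ → Submodule ℂ (EuclideanSpace ℂ (Fin N))),
    (∀ k, x k ∈ Xreg) ∧ (∀ k, x k ≠ 0) ∧ Tendsto x atTop (𝓝 0) ∧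
    (∀ k, Module.finrank ℂ (Hs k) = N - 1) ∧ (∀ k, τ (x k) ≤ Hs k) ∧
    SubspaceTendsto N Hs H

/-! A limit `H = lim H_k` of hyperplanes `H_k ⊇ τ(x_k)` contains, after passing to a subsequence
(the Grassmannian is compact), a limit `T` of the `τ(x_k)`, so `H ⊔ T = H ≠ ℂ^N`. Conversely, if
a limiting tangent space `T = lim τ(x_k)` is not transversal to the hyperplane `H = nᗮ`, then
`T ≤ H`, i.e. `n ⊥ T`; the components `m_k` of `n` orthogonal to `τ(x_k)` then tend to `n`, and
the hyperplanes `m_kᗮ ⊇ τ(x_k)` tend to `H`. -/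

open Module Submodule

theorem ContinuousLinearMap.isClosed_setOf_isStarProjection {𝕜 E : Type*} [RCLike 𝕜]
    [NormedAddCommGroup E] [InnerProductSpace 𝕜 E] [CompleteSpace E] :
    IsClosed {p : E →L[𝕜] E | IsStarProjection p} := by
  simp only [isStarProjection_iff, Set.ofPred_and]
  exact (isClosed_eq (continuous_id.mul continuous_id) continuous_id).inter
    (isClosed_eq continuous_star continuous_id)

namespace Submodule

variable {𝕜 E ι : Type*} [RCLike 𝕜] [NormedAddCommGroup E] [InnerProductSpace 𝕜 E]
  {l : Filter ι}

theorem exists_subseq_tendsto_starProjection [FiniteDimensional 𝕜 E] (K : ℕ → Submodule 𝕜 E) :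
    ∃ (T : Submodule 𝕜 E) (φ : ℕ → ℕ), StrictMono φ ∧
      ∀ v, Tendsto (fun k => (K (φ k)).starProjection v) atTop (𝓝 (T.starProjection v)) := by
  have := FiniteDimensional.complete 𝕜 E
  have : ProperSpace (E →L[𝕜] E) := FiniteDimensional.proper 𝕜 _
  have hcpt : IsCompact (Metric.closedBall (0 : E →L[𝕜] E) 1 ∩ {p | IsStarProjection p}) :=
    (isCompact_closedBall 0 1).inter_right ContinuousLinearMap.isClosed_setOf_isStarProjection
  obtain ⟨p, ⟨-, hp⟩, φ, hφ, hlim⟩ := hcpt.tendsto_subseq fun k =>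
    ⟨mem_closedBall_zero_iff.2 (K k).starProjection_norm_le, isStarProjection_starProjection⟩
  obtain ⟨T, _, rfl⟩ := isStarProjection_iff_eq_starProjection.1 hp
  exact ⟨T, φ, hφ, fun v => ((ContinuousLinearMap.apply 𝕜 E v).continuous.tendsto _).comp hlim⟩

theorem norm_sub_starProjection_le {U : Submodule 𝕜 E} [U.HasOrthogonalProjection] (v : E)
    {w : E} (hw : w ∈ U) : ‖v - U.starProjection v‖ ≤ ‖v - w‖ :=
  (starProjection_minimal v).trans_le
    (ciInf_le ⟨0, Set.forall_mem_range.2 fun _ => norm_nonneg _⟩ (⟨w, hw⟩ : U))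

theorem le_of_tendsto_starProjection [FiniteDimensional 𝕜 E] [l.NeBot]
    {K L : ι → Submodule 𝕜 E} {T H : Submodule 𝕜 E}
    (hK : ∀ v, Tendsto (fun k => (K k).starProjection v) l (𝓝 (T.starProjection v)))
    (hL : ∀ v, Tendsto (fun k => (L k).starProjection v) l (𝓝 (H.starProjection v)))
    (hKL : ∀ k, K k ≤ L k) : T ≤ H := by
  intro v hv
  have hKv : Tendsto (fun k => (K k).starProjection v) l (𝓝 v) := by
    simpa only [starProjection_eq_self_iff.2 hv] using hK v
  -- `P_{L k} v` is the point of `L k` nearest to `v`, and `P_{K k} v ∈ L k`.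
  have hLv : Tendsto (fun k => (L k).starProjection v) l (𝓝 v) := by
    rw [tendsto_iff_norm_sub_tendsto_zero] at hKv ⊢
    refine squeeze_zero (fun _ => norm_nonneg _) (fun k => ?_) hKv
    rw [norm_sub_rev, norm_sub_rev ((K k).starProjection v)]
    exact norm_sub_starProjection_le v (hKL k (starProjection_apply_mem _ v))
  exact starProjection_eq_self_iff.1 (tendsto_nhds_unique (hL v) hLv)

theorem tendsto_starProjection_orthogonal [FiniteDimensional 𝕜 E]
    {K : ι → Submodule 𝕜 E} {T : Submodule 𝕜 E}
    (hK : ∀ v, Tendsto (fun k => (K k).starProjection v) l (𝓝 (T.starProjection v))) (v : E) :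
    Tendsto (fun k => (K k)ᗮ.starProjection v) l (𝓝 (Tᗮ.starProjection v)) := by
  simpa only [starProjection_orthogonal_val] using (tendsto_const_nhds (x := v)).sub (hK v)

theorem tendsto_starProjection_span_singleton {m : ι → E} {n : E} (hm : Tendsto m l (𝓝 n))
    (hn : n ≠ 0) (v : E) :
    Tendsto (fun k => (𝕜 ∙ m k).starProjection v) l (𝓝 ((𝕜 ∙ n).starProjection v)) := by
  simp only [starProjection_singleton]
  have hn' : ((‖n‖ ^ 2 : ℝ) : 𝕜) ≠ 0 := by simpa using hn
  exact ((hm.inner tendsto_const_nhds).div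
    ((RCLike.continuous_ofReal.tendsto _).comp (hm.norm.pow 2)) hn').smul hm

variable [FiniteDimensional 𝕜 E]

theorem finrank_orthogonal_span_singleton_add_one {v : E} (hv : v ≠ 0) :
    finrank 𝕜 (𝕜 ∙ v)ᗮ + 1 = finrank 𝕜 E := by
  rw [← finrank_span_singleton (K := 𝕜) hv, add_comm, finrank_add_finrank_orthogonal]

theorem exists_ne_zero_eq_orthogonal_span_singleton_of_finrank_add_one_eq
    {H : Submodule 𝕜 E} (hH : finrank 𝕜 H + 1 = finrank 𝕜 E) : ∃ n ≠ 0, H = (𝕜 ∙ n)ᗮ := by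
  have h1 : finrank 𝕜 Hᗮ = 1 := finrank_add_finrank_orthogonal' hH
  obtain ⟨n, hn, hn0⟩ := exists_mem_ne_zero_of_ne_bot fun h : Hᗮ = ⊥ => by
    rw [h, finrank_bot] at h1
    exact zero_ne_one h1
  refine ⟨n, hn0, ?_⟩
  rw [← eq_span_singleton_of_mem_of_finrank_eq_one h1 hn hn0, orthogonal_orthogonal]

theorem le_of_sup_ne_top_of_finrank_add_one_eq {H T : Submodule 𝕜 E}
    (hH : finrank 𝕜 H + 1 = finrank 𝕜 E) (hHT : H ⊔ T ≠ ⊤) : T ≤ H := by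
  have := finrank_lt hHT
  have := finrank_mono (le_sup_left : H ≤ H ⊔ T)
  exact sup_eq_left.1 (eq_of_le_of_finrank_le le_sup_left (by omega)).symm

end Submodule

variable {N}

theorem IsLimitTangentHyperplane.exists_isLimitTangentSpace_le
    {Xreg : Set (EuclideanSpace ℂ (Fin N))}
    {τ : EuclideanSpace ℂ (Fin N) → Submodule ℂ (EuclideanSpace ℂ (Fin N))}
    {H : Submodule ℂ (EuclideanSpace ℂ (Fin N))} (h : IsLimitTangentHyperplane N Xreg τ H) :
    ∃ T, IsLimitTangentSpace N Xreg τ T ∧ T ≤ H := by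
  obtain ⟨x, Hs, hxX, hx0, hx, -, hτHs, hHs⟩ := h
  obtain ⟨T, φ, hφ, hT⟩ := exists_subseq_tendsto_starProjection fun k => τ (x k)
  exact ⟨T, ⟨x ∘ φ, fun k => hxX _, fun k => hx0 _, hx.comp hφ.tendsto_atTop, hT⟩,
    le_of_tendsto_starProjection hT (fun v => (hHs v).comp hφ.tendsto_atTop) fun k => hτHs (φ k)⟩

theorem IsLimitTangentSpace.isLimitTangentHyperplane {Xreg : Set (EuclideanSpace ℂ (Fin N))}
    {τ : EuclideanSpace ℂ (Fin N) → Submodule ℂ (EuclideanSpace ℂ (Fin N))}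
    {T : Submodule ℂ (EuclideanSpace ℂ (Fin N))} (h : IsLimitTangentSpace N Xreg τ T)
    {n : EuclideanSpace ℂ (Fin N)} (hn : n ≠ 0) (hTn : T ≤ (ℂ ∙ n)ᗮ) :
    IsLimitTangentHyperplane N Xreg τ (ℂ ∙ n)ᗮ := by
  obtain ⟨x, hxX, hx0, hx, hT⟩ := h
  have hnT : n ∈ Tᗮ := orthogonal_le hTn (le_orthogonal_orthogonal _ (mem_span_singleton_self n))
  have hm : Tendsto (fun k => (τ (x k))ᗮ.starProjection n) atTop (𝓝 n) := by
    simpa only [starProjection_eq_self_iff.2 hnT] using tendsto_starProjection_orthogonal hT n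
  set m := fun k => (τ (x k))ᗮ.starProjection n
  obtain ⟨k₀, hk₀⟩ := eventually_atTop.1 (hm.eventually_ne hn)
  have hshift := tendsto_add_atTop_nat k₀
  refine ⟨fun k => x (k + k₀), fun k => (ℂ ∙ m (k + k₀))ᗮ, fun k => hxX _, fun k => hx0 _,
    hx.comp hshift, fun k => ?_, fun k => ?_,
    tendsto_starProjection_orthogonal (tendsto_starProjection_span_singleton (hm.comp hshift) hn)⟩
  · have := finrank_orthogonal_span_singleton_add_one (𝕜 := ℂ) (hk₀ (k + k₀) (Nat.le_add_left _ _))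
    rw [finrank_euclideanSpace_fin] at this
    dsimp only
    omega
  · rw [← isOrtho_iff_le, isOrtho_comm, isOrtho_iff_le, span_singleton_le_iff_mem]
    exact starProjection_apply_mem _ n

theorem general_iff_not_limit_of_tangent_hyperplanes_general
    (hN : 1 ≤ N)
    (Xreg : Set (EuclideanSpace ℂ (Fin N)))
    (τ : EuclideanSpace ℂ (Fin N) → Submodule ℂ (EuclideanSpace ℂ (Fin N)))
    (H : Submodule ℂ (EuclideanSpace ℂ (Fin N)))
    (hH : Module.finrank ℂ H = N - 1) :
    (∀ T : Submodule ℂ (EuclideanSpace ℂ (Fin N)),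
        IsLimitTangentSpace N Xreg τ T → H ⊔ T = ⊤) ↔
      ¬ IsLimitTangentHyperplane N Xreg τ H := by
  have hH' : finrank ℂ H + 1 = finrank ℂ (EuclideanSpace ℂ (Fin N)) := by
    rw [finrank_euclideanSpace_fin]
    omega
  constructor
  · rintro htrans hlim
    obtain ⟨T, hT, hTH⟩ := hlim.exists_isLimitTangentSpace_le
    have hH_top : H = ⊤ := sup_eq_left.2 hTH ▸ htrans T hT
    rw [hH_top, finrank_top] at hH'
    omega
  · rintro hnot T hT
    by_contra hHT
    obtain ⟨n, hn, rfl⟩ := exists_ne_zero_eq_orthogonal_span_singleton_of_finrank_add_one_eq hH'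
    exact hnot (hT.isLimitTangentHyperplane hn (le_of_sup_ne_top_of_finrank_add_one_eq hH' hHT))

/-- Proposition 4.1: a hyperplane `H ⊂ ℂ^N` through `0` is general to `X` at `0`
(transversal to every limit of tangent spaces of the regular part of `X` at `0`) if and
only if `H` is not a limit of tangent hyperplanes to `X` at `0`. -/
theorem general_iff_not_limit_of_tangent_hyperplanes
    (d : ℕ) (hd : 1 ≤ d) (hdN : d ≤ N) (hN : 1 ≤ N)
    (Xreg : Set (EuclideanSpace ℂ (Fin N)))
    (τ : EuclideanSpace ℂ (Fin N) → Submodule ℂ (EuclideanSpace ℂ (Fin N)))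
    (hτ : ∀ x ∈ Xreg, Module.finrank ℂ (τ x) = d)
    (hacc : (0 : EuclideanSpace ℂ (Fin N)) ∈ closure (Xreg \ {0}))
    (H : Submodule ℂ (EuclideanSpace ℂ (Fin N)))
    (hH : Module.finrank ℂ H = N - 1) :
    (∀ T : Submodule ℂ (EuclideanSpace ℂ (Fin N)),
        IsLimitTangentSpace N Xreg τ T → H ⊔ T = ⊤) ↔
      ¬ IsLimitTangentHyperplane N Xreg τ H :=
  general_iff_not_limit_of_tangent_hyperplanes_general hN Xreg τ H hH

end
end
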